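/- A single path equivalence class c (a set of paths, all of whose indices are below the maximal arity of the signature) is satisfiable by some term if and only if c is prefix-free. -/
import Mathlib


universe u
variable {S : Type u}

/-- Terms over a signature: a symbol applied to a list of child terms. -/
inductive Term (S : Type u) where
  | mk : S → List (Term S) → Term S

/-- The i-th child of a term, if it exists. -/
def Term.child : Term S → ℕ → Option (Term S)
  | .mk _ ts, i => ts[i]?

/-- Subterm of `t` at path `p` (partial). -/
def subAt : List ℕ → Term S → Option (Term S)
  | [], t => some t
  | i :: p, t => (t.child i).bind (subAt p)

/-- A term satisfies a path equivalence class `c` if the subterms at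
all paths of `c` exist and are equal. -/
def pecSat (c : Set (List ℕ)) (t : Term S) : Prop :=
  ∃ t', ∀ p ∈ c, subAt p t = some t'

/-- A term satisfies a path constraint set if it satisfies each member PEC. -/
def pcsSat (C : Set (Set (List ℕ))) (t : Term S) : Prop :=
  ∀ c ∈ C, pecSat c t

/-- A PCS is closed if whenever `p', p'' ∈ c₁ ∈ C` and `p'.p ∈ c₂ ∈ C`,
then also `p''.p ∈ c₂`. -/
def Closed (C : Set (Set (List ℕ))) : Prop :=
  ∀ c₁ ∈ C, ∀ c₂ ∈ C, ∀ p' p'' p : List ℕ,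
    p' ∈ c₁ → p'' ∈ c₁ → p' ++ p ∈ c₂ → p'' ++ p ∈ c₂

/-- A set of paths is prefix-free if no member is a proper prefix of another. -/
def PrefixFree (c : Set (List ℕ)) : Prop :=
  ∀ p ∈ c, ∀ q ∈ c, p <+: q → p = q

/-- Well-formed terms with respect to an arity function. -/
inductive WFT (ar : S → ℕ) : Term S → Prop where
  | mk {s : S} {ts : List (Term S)} :
      ts.length = ar s → (∀ t ∈ ts, WFT ar t) → WFT ar (Term.mk s ts)

lemma subAt_append (p q : List ℕ) (t : Term S) :
    subAt (p ++ q) t = (subAt p t).bind (subAt q) := by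
  induction p generalizing t with
  | nil => simp [subAt]
  | cons i p ih =>
    simp only [List.cons_append, subAt]
    cases t.child i with
    | none => simp
    | some u => simp [ih]

lemma sizeOf_child {t u : Term S} {i : ℕ} (h : t.child i = some u) :
    sizeOf u < sizeOf t := by
  obtain ⟨s, ts⟩ := t
  simp only [Term.child] at h
  have hm : u ∈ ts := by
    have := List.getElem?_eq_some_iff.mp h
    obtain ⟨hi, rfl⟩ := this
    exact List.getElem_mem _
  have h1 : sizeOf u < sizeOf ts := List.sizeOf_lt_of_mem hm
  have h2 : sizeOf (Term.mk s ts) = 1 + sizeOf s + sizeOf ts := by simp [Term.mk.sizeOf_spec]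
  omega

lemma subAt_size {p : List ℕ} {t u : Term S} (h : subAt p t = some u) :
    sizeOf u ≤ sizeOf t ∧ (p ≠ [] → sizeOf u < sizeOf t) := by
  induction p generalizing t with
  | nil => simp [subAt] at h; subst h; simp
  | cons i p ih =>
    simp only [subAt] at h
    cases hc : t.child i with
    | none => rw [hc] at h; simp at h
    | some v =>
      rw [hc] at h
      simp only [Option.bind_some] at h
      have := ih h
      have := sizeOf_child hc
      exact ⟨by omega, fun _ => by omega⟩

lemma subAt_self {p : List ℕ} {t : Term S} (h : subAt p t = some t) : p = [] := by
  by_contra hne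
  have := (subAt_size h).2 hne
  omega

def buildT (s₀ s₁ : S) (N : ℕ) : ℕ → List (List ℕ) → Term S
  | 0, _ => .mk s₀ []
  | d+1, l =>
    if [] ∈ l then .mk s₀ []
    else .mk s₁ ((List.range N).map fun i =>
      buildT s₀ s₁ N d (l.filterMap fun p => match p with
        | [] => none
        | j :: q => if j = i then some q else none))

lemma mem_tails {l : List (List ℕ)} {i : ℕ} {q : List ℕ} :
    q ∈ (l.filterMap fun p => match p with
        | [] => none
        | j :: r => if j = i then some r else none) ↔ i :: q ∈ l := by
  simp only [List.mem_filterMap]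
  constructor
  · rintro ⟨p, hp, hf⟩
    match p with
    | [] => simp at hf
    | j :: r =>
      simp only at hf
      split at hf
      · rename_i hji; cases hf; subst hji; exact hp
      · simp at hf
  · intro h
    exact ⟨i :: q, h, by simp⟩

lemma buildT_wf (ar : S → ℕ) (s₀ s₁ : S) (h₀ : ar s₀ = 0) (h₁ : ar s₁ = N) :
    ∀ d l, WFT ar (buildT s₀ s₁ N d l) := by
  intro d
  induction d with
  | zero => intro l; exact WFT.mk (by simp [h₀]) (by simp)
  | succ d ih =>
    intro l
    rw [buildT]
    split
    · exact WFT.mk (by simp [h₀]) (by simp)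
    · refine WFT.mk (by simp [h₁]) ?_
      intro t ht
      simp only [List.mem_map] at ht
      obtain ⟨i, _, rfl⟩ := ht
      exact ih _

lemma buildT_sub (s₀ s₁ : S) (N : ℕ) :
    ∀ d (l : List (List ℕ)) (p : List ℕ), p ∈ l → p.length ≤ d →
    (∀ q ∈ l, ∀ i ∈ q, i < N) →
    (∀ a ∈ l, ∀ b ∈ l, a <+: b → a = b) →
    subAt p (buildT s₀ s₁ N d l) = some (Term.mk s₀ []) := by
  intro d
  induction d with
  | zero =>
    intro l p hp hlen _ _
    have : p = [] := List.length_eq_zero_iff.mp (Nat.le_zero.mp hlen)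
    subst this
    simp [buildT, subAt]
  | succ d ih =>
    intro l p hp hlen hN hpf
    match p with
    | [] =>
      rw [buildT, if_pos hp]
      simp [subAt]
    | i :: q =>
      have hnil : [] ∉ l := by
        intro hmem
        have := hpf [] hmem (i :: q) hp ⟨i :: q, rfl⟩
        simp at this
      rw [buildT, if_neg hnil]
      have hiN : i < N := hN _ hp i (by simp)
      simp only [subAt, Term.child]
      rw [List.getElem?_map, List.getElem?_range hiN]
      simp only [Option.map_some, Option.bind_some]
      apply ih
      · exact mem_tails.mpr hp
      · simpa using hlen
      · intro r hr j hj
        exact hN _ (mem_tails.mp hr) j (by simp [hj])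
      · intro a ha b hb hpre
        have := hpf _ (mem_tails.mp ha) _ (mem_tails.mp hb)
          (List.cons_prefix_cons.mpr ⟨rfl, hpre⟩)
        exact (List.cons.injEq .. ▸ this).2

lemma le_foldr_max : ∀ (l : List ℕ), ∀ x ∈ l, x ≤ l.foldr max 0 := by
  intro l
  induction l with
  | nil => simp
  | cons a l ih =>
    intro x hx
    simp only [List.foldr_cons]
    rcases List.mem_cons.mp hx with rfl | h
    · exact le_max_left _ _
    · exact le_trans (ih x h) (le_max_right _ _)

/-- A single (finite) PEC `c` is satisfiable by some well-formed term iff it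
is prefix-free, provided the signature has a nullary symbol and, for each
index `i` occurring in paths of `c`, a symbol of arity greater than `i`. -/
theorem pec_satisfiable_iff_prefixFree
    {S : Type u} (ar : S → ℕ)
    (s₀ : S) (h₀ : ar s₀ = 0)
    (c : Set (List ℕ)) (hfin : c.Finite)
    (hsym : ∀ p ∈ c, ∀ i ∈ p, ∃ s : S, i < ar s) :
    (∃ t : Term S, WFT ar t ∧ pecSat c t) ↔ PrefixFree c := by
  constructor
  · rintro ⟨t, _, t', ht⟩ p hp q hq ⟨r, rfl⟩
    have h1 := ht p hp
    have h2 := ht _ hq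
    rw [subAt_append, h1, Option.bind_some] at h2
    have := subAt_self h2
    subst this
    simp
  · intro hpf
    set L := hfin.toFinset.toList with hL
    have memL : ∀ p, p ∈ L ↔ p ∈ c := by
      intro p; rw [hL, Finset.mem_toList, Set.Finite.mem_toFinset]
    -- choose a symbol with arity larger than all indices
    have hs₁ : ∃ s₁ : S, ∀ p ∈ c, ∀ i ∈ p, i < ar s₁ := by
      set J := L.flatten with hJ
      have memJ : ∀ i, i ∈ J ↔ ∃ p ∈ L, i ∈ p := by
        intro i; rw [hJ, List.mem_flatten]
      rcases eq_or_ne J [] with hnil | hne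
      · refine ⟨s₀, fun p hp i hi => absurd ?_ (by simp [hnil] : i ∉ J)⟩
        exact (memJ i).mpr ⟨p, (memL p).mpr hp, hi⟩
      · have hne' : J.toFinset.Nonempty := by
          rcases List.exists_mem_of_ne_nil J hne with ⟨i, hi⟩
          exact ⟨i, List.mem_toFinset.mpr hi⟩
        set m := J.toFinset.max' hne' with hm
        have hmJ : m ∈ J := List.mem_toFinset.mp (J.toFinset.max'_mem hne')
        obtain ⟨pm, hpm, hmm⟩ := (memJ m).mp hmJ
        obtain ⟨s₁, hs₁⟩ := hsym pm ((memL pm).mp hpm) m hmm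
        refine ⟨s₁, fun p hp i hi => ?_⟩
        have : i ≤ m := J.toFinset.le_max'
          i (List.mem_toFinset.mpr ((memJ i).mpr ⟨p, (memL p).mpr hp, hi⟩))
        omega
    obtain ⟨s₁, hs₁⟩ := hs₁
    set d := (L.map List.length).foldr max 0 with hd
    refine ⟨buildT s₀ s₁ (ar s₁) d L,
      buildT_wf ar s₀ s₁ h₀ rfl d L, Term.mk s₀ [], ?_⟩
    intro p hp
    apply buildT_sub
    · exact (memL p).mpr hp
    · exact le_foldr_max _ _ (List.mem_map.mpr ⟨p, (memL p).mpr hp, rfl⟩)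
    · intro q hq i hi; exact hs₁ q ((memL q).mp hq) i hi
    · intro a ha b hb hpre; exact hpf a ((memL a).mp ha) b ((memL b).mp hb) hpre
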